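/- For every n ∈ ℕ there exists a Boolean function f : {0,1}^n × {0,1}^n → {0,1} whose garden-hose complexity s = GH(f) satisfies (s+1) · log₂(s+1) ≥ 2^{n−1}; in particular there exist functions with exponential garden-hose complexity. -/

import Mathlib

/-- A partial matching on the vertex type `V`, encoded by a partner function:
`m i = some j` means that there is an edge between `i` and `j`;
the graph `{ {i,j} | m i = some j }` then has maximum degree at most `1`
and no self-loops. -/
def IsPartialMatching {V : Type*} (m : V → Option V) : Prop :=
  ∀ i j, m i = some j → i ≠ j ∧ m j = some i

/-- The position of the water in a garden-hose game with `s` pipes: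
`atAlice i` (resp. `atBob i`) means the water has just arrived at Alice's
(resp. Bob's) end of pipe `i`; `exitA` / `exitB` mean the water has exited
on Alice's / Bob's side, i.e. the maximal path starting at the tap has ended
in `A∘` / in `B`. -/
inductive GHState (s : ℕ) where
  | atAlice : Fin s → GHState s
  | atBob : Fin s → GHState s
  | exitA : GHState s
  | exitB : GHState s
  deriving DecidableEq

/-- Vertex `k` of `A∘ = {0, 1, ..., s}` viewed as a pipe: vertex `0` is the water
tap (no pipe), and vertex `i + 1` is Alice's end of pipe `i`. -/
def toPipe {s : ℕ} (k : Fin (s + 1)) : Option (Fin s) :=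
  if h : (k : ℕ) = 0 then none
  else some ⟨(k : ℕ) - 1, by have := k.isLt; omega⟩

/-- One step of the water flow, given Alice's connections `a` on `A∘ = {0,...,s}`
and Bob's connections `b` on `B = {1,...,s}` (indexed by pipes `Fin s`). -/
def ghStep {s : ℕ} (a : Fin (s + 1) → Option (Fin (s + 1)))
    (b : Fin s → Option (Fin s)) : GHState s → GHState s
  | GHState.atAlice i =>
    match a i.succ with
    | none => GHState.exitA
    | some k =>
      match toPipe k with
      | none => GHState.exitA
      | some p => GHState.atBob p
  | GHState.atBob i =>
    match b i with
    | none => GHState.exitB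
    | some j => GHState.atAlice j
  | GHState.exitA => GHState.exitA
  | GHState.exitB => GHState.exitB

/-- The start of the water flow: the tap (vertex `0` of `A∘`) is connected by
Alice to at most one pipe. -/
def ghStart {s : ℕ} (a : Fin (s + 1) → Option (Fin (s + 1))) : GHState s :=
  match a 0 with
  | none => GHState.exitA
  | some k =>
    match toPipe k with
    | none => GHState.exitA
    | some p => GHState.atBob p

/-- The endpoint of the maximal path `π(x,y)` starting at the tap: since the graph
has maximum degree `2` and the path is simple, it is reached after at most
`2s + 2` steps. -/
def ghResult {s : ℕ} (a : Fin (s + 1) → Option (Fin (s + 1)))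
    (b : Fin s → Option (Fin s)) : GHState s :=
  (ghStep a b)^[2 * s + 2] (ghStart a)

/-- A garden-hose game of size `s` on inputs `{0,1}^n × {0,1}^n`: for every input
`x` Alice chooses a partial matching `EA x` on `A∘ = {0,1,…,s}` and for every
input `y` Bob chooses a partial matching `EB y` on `B = {1,…,s}`. -/
structure GHGame (n s : ℕ) where
  EA : (Fin n → Bool) → Fin (s + 1) → Option (Fin (s + 1))
  EB : (Fin n → Bool) → Fin s → Option (Fin s)
  matchA : ∀ x, IsPartialMatching (EA x)
  matchB : ∀ y, IsPartialMatching (EB y)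

/-- Where the water exits on input `(x, y)`. -/
def GHGame.run {n s : ℕ} (G : GHGame n s) (x y : Fin n → Bool) : GHState s :=
  ghResult (G.EA x) (G.EB y)

/-- The game `G` computes `f` if for all inputs the maximal path from the tap ends
in `A∘` whenever `f x y = 0` (water exits on Alice's side) and in `B` whenever
`f x y = 1` (water exits on Bob's side). -/
def GHGame.Computes {n s : ℕ} (G : GHGame n s)
    (f : (Fin n → Bool) → (Fin n → Bool) → Bool) : Prop :=
  ∀ x y, G.run x y = if f x y then GHState.exitB else GHState.exitA

/-- The garden-hose complexity of `f`: the minimal number of pipes of a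
garden-hose game computing `f`. -/
noncomputable def GH {n : ℕ} (f : (Fin n → Bool) → (Fin n → Bool) → Bool) : ℕ :=
  sInf {s : ℕ | ∃ G : GHGame n s, G.Computes f}

/-!
A counting argument. A partial matching on `V` is the same thing as an involution of `V`
(unmatched vertices being the fixed points), so a game of size `s` is determined by `2 ^ n`
permutations of `Fin (s + 1)` and `2 ^ n` permutations of `Fin s`, and at most
`((s + 1)! * s !) ^ 2 ^ n` functions have `GH f = s`. With `N = 2 ^ n`, if every `f` had
`(s + 1) ^ (2 * (s + 1)) < 2 ^ N` for `s = GH f`, then `(s + 1)! * s ! ≤ 2 ^ (N - 1)` and fewer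
than `2 ^ N` values of `s` would occur, leaving room for fewer than `2 ^ (N * N)` functions.
That `GH f` is attained at all comes from the game in which Alice sends the water into a pipe
indexed by `x`, where Bob lets it out if `f x y` and otherwise returns it through a twin pipe.
-/

open Finset Nat

section Matchings

variable {V : Type*}

def matchingOfInvolution [DecidableEq V] (σ : V → V) : V → Option V :=
  fun i => if σ i = i then none else some (σ i)

theorem isPartialMatching_matchingOfInvolution [DecidableEq V] {σ : V → V}
    (hσ : Function.Involutive σ) : IsPartialMatching (matchingOfInvolution σ) := by
  intro i j hij
  simp only [matchingOfInvolution] at hij ⊢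
  split_ifs at hij with hi
  cases hij
  exact ⟨Ne.symm hi, by simp [hσ i, Ne.symm hi]⟩

def partnerOrSelf (m : V → Option V) (i : V) : V := (m i).getD i

theorem IsPartialMatching.involutive_partnerOrSelf {m : V → Option V}
    (h : IsPartialMatching m) : Function.Involutive (partnerOrSelf m) := by
  intro i
  cases hi : m i with
  | none => simp [partnerOrSelf, hi]
  | some j => simp [partnerOrSelf, hi, (h i j hi).2]

theorem IsPartialMatching.matchingOfInvolution_partnerOrSelf [DecidableEq V]
    {m : V → Option V} (h : IsPartialMatching m) : matchingOfInvolution (partnerOrSelf m) = m := by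
  funext i
  cases hi : m i with
  | none => simp [matchingOfInvolution, partnerOrSelf, hi]
  | some j => simp [matchingOfInvolution, partnerOrSelf, hi, Ne.symm (h i j hi).1]

end Matchings

section Flow

variable {s : ℕ}

theorem toPipe_succ (p : Fin s) : toPipe p.succ = some p := by
  simp [toPipe]

theorem ghResult_eq_of_iterate_eq {a : Fin (s + 1) → Option (Fin (s + 1))}
    {b : Fin s → Option (Fin s)} {k : ℕ} {e : GHState s} (hk : k ≤ 2 * s + 2)
    (he : ghStep a b e = e) (h : (ghStep a b)^[k] (ghStart a) = e) : ghResult a b = e := by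
  rw [ghResult, ← Nat.sub_add_cancel hk, Function.iterate_add_apply, h,
    Function.iterate_fixed he]

theorem ghResult_swap_zero_succ (p : Fin s) (σ : Fin s → Fin s) :
    ghResult (matchingOfInvolution (Equiv.swap 0 p.succ)) (matchingOfInvolution σ) =
      if σ p = p then GHState.exitB else GHState.exitA := by
  have hstart : ghStart (matchingOfInvolution (Equiv.swap 0 p.succ)) = GHState.atBob p := by
    simp [ghStart, matchingOfInvolution, toPipe_succ]
  split_ifs with hp
  · refine ghResult_eq_of_iterate_eq (k := 1) (by omega) rfl ?_
    simp [hstart, ghStep, matchingOfInvolution, hp]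
  · have hne : (σ p).succ ≠ p.succ := fun h => hp (Fin.succ_injective _ h)
    refine ghResult_eq_of_iterate_eq (k := 2) (by omega) rfl ?_
    simp [hstart, ghStep, matchingOfInvolution, hp,
      Equiv.swap_apply_of_ne_of_ne (Fin.succ_ne_zero _) hne]

end Flow

def swapUnless {X : Type*} (P : X → Prop) [DecidablePred P] (v : X ⊕ X) : X ⊕ X :=
  if P (v.elim id id) then v else v.swap

theorem involutive_swapUnless {X : Type*} (P : X → Prop) [DecidablePred P] :
    Function.Involutive (swapUnless P) := by
  intro v
  rcases v with x | x <;> by_cases hx : P x <;> simp [swapUnless, hx]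

theorem GHGame.exists_computes {n : ℕ} (f : (Fin n → Bool) → (Fin n → Bool) → Bool) :
    ∃ s, ∃ G : GHGame n s, G.Computes f := by
  let E := Fintype.equivFin ((Fin n → Bool) ⊕ (Fin n → Bool))
  let σ : (Fin n → Bool) → Fin _ → Fin _ := fun y i =>
    E (swapUnless (fun x => f x y = true) (E.symm i))
  have hσ : ∀ y, Function.Involutive (σ y) := fun y i => by
    simp [σ, involutive_swapUnless _ (E.symm i)]
  refine ⟨_, ⟨fun x => matchingOfInvolution (Equiv.swap 0 (E (.inl x)).succ),
    fun y => matchingOfInvolution (σ y),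
    fun x => isPartialMatching_matchingOfInvolution (Equiv.swap_apply_self _ _),
    fun y => isPartialMatching_matchingOfInvolution (hσ y)⟩, fun x y => ?_⟩
  rw [GHGame.run, ghResult_swap_zero_succ]
  cases hf : f x y <;> simp [σ, swapUnless, hf]

section Counting

open Equiv

def evalInvolutions {n s : ℕ} (α : (Fin n → Bool) → Perm (Fin (s + 1)))
    (β : (Fin n → Bool) → Perm (Fin s)) : (Fin n → Bool) → (Fin n → Bool) → Bool :=
  fun x y => ghResult (matchingOfInvolution (α x)) (matchingOfInvolution (β y)) = .exitB

theorem GHGame.Computes.exists_evalInvolutions_eq {n s : ℕ} {G : GHGame n s}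
    {f : (Fin n → Bool) → (Fin n → Bool) → Bool} (hG : G.Computes f) :
    ∃ (α : (Fin n → Bool) → Perm (Fin (s + 1))) (β : (Fin n → Bool) → Perm (Fin s)),
      evalInvolutions α β = f := by
  refine ⟨fun x => (G.matchA x).involutive_partnerOrSelf.toPerm,
    fun y => (G.matchB y).involutive_partnerOrSelf.toPerm, funext₂ fun x y => ?_⟩
  simp only [evalInvolutions, Function.Involutive.coe_toPerm,
    IsPartialMatching.matchingOfInvolution_partnerOrSelf, G.matchA x, G.matchB y]
  rw [← GHGame.run, hG x y]
  cases f x y <;> simp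

theorem card_GH_eq_le (n s : ℕ) :
    #{f : (Fin n → Bool) → (Fin n → Bool) → Bool | GH f = s} ≤ ((s + 1)! * s !) ^ 2 ^ n := by
  calc #{f : (Fin n → Bool) → (Fin n → Bool) → Bool | GH f = s}
      ≤ #(univ.image fun p : _ × _ => evalInvolutions p.1 p.2) := by
        refine card_le_card fun f hf => ?_
        obtain rfl := (mem_filter.1 hf).2
        obtain ⟨G, hG⟩ : ∃ G : GHGame n (GH f), G.Computes f :=
          Nat.sInf_mem (GHGame.exists_computes f)
        obtain ⟨α, β, hαβ⟩ := hG.exists_evalInvolutions_eq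
        exact mem_image.2 ⟨(α, β), mem_univ _, hαβ⟩
    _ ≤ Fintype.card (((Fin n → Bool) → Perm (Fin (s + 1))) × ((Fin n → Bool) → Perm (Fin s))) :=
        card_image_le
    _ = ((s + 1)! * s !) ^ 2 ^ n := by
        simp [Fintype.card_perm, mul_pow]

end Counting

theorem factorial_mul_factorial_le_two_pow {s N : ℕ} (h : ((s + 1) ^ (s + 1)) ^ 2 < 2 ^ N) :
    (s + 1)! * s ! ≤ 2 ^ (N - 1) := by
  rcases s with _ | t
  · simpa using Nat.one_le_two_pow
  show (t + 2)! * (t + 1)! ≤ 2 ^ (N - 1)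
  have hfac : (t + 2)! ≤ (t + 2) ^ (t + 2) := Nat.factorial_le_pow _
  have htwo : 2 * (t + 1)! ≤ (t + 2)! := by
    rw [Nat.factorial_succ (t + 1)]
    exact Nat.mul_le_mul_right _ (by omega)
  have hlt : 2 * ((t + 2)! * (t + 1)!) < 2 ^ N := calc
    2 * ((t + 2)! * (t + 1)!) = (t + 2)! * (2 * (t + 1)!) := by ring
    _ ≤ ((t + 2) ^ (t + 2)) ^ 2 := by rw [sq]; exact Nat.mul_le_mul hfac (htwo.trans hfac)
    _ < 2 ^ N := h
  rcases N with _ | N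
  · rw [pow_zero] at hlt
    omega
  · rw [pow_succ] at hlt
    rw [Nat.add_sub_cancel]
    omega

theorem exists_two_pow_two_pow_le_GH (n : ℕ) :
    ∃ f : (Fin n → Bool) → (Fin n → Bool) → Bool,
      2 ^ 2 ^ n ≤ ((GH f + 1) ^ (GH f + 1)) ^ 2 := by
  by_contra! hsmall
  set N := 2 ^ n with hN
  have hN1 : 1 ≤ N := Nat.one_le_two_pow
  let feasible := {s ∈ range (2 ^ N - 1) | ((s + 1) ^ (s + 1)) ^ 2 < 2 ^ N}
  have hmaps : ∀ f ∈ (univ : Finset ((Fin n → Bool) → (Fin n → Bool) → Bool)),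
      GH f ∈ feasible := fun f _ => by
    have hle : GH f + 1 ≤ ((GH f + 1) ^ (GH f + 1)) ^ 2 :=
      (Nat.le_self_pow (Nat.succ_ne_zero _) _).trans (Nat.le_self_pow two_ne_zero _)
    exact mem_filter.2 ⟨mem_range.2 (by have hsmall_f := hsmall f; omega), hsmall f⟩
  have hfiber : ∀ s ∈ feasible, #{f | GH f = s} ≤ (2 ^ (N - 1)) ^ N := fun s hs =>
    (card_GH_eq_le n s).trans
      (Nat.pow_le_pow_left (factorial_mul_factorial_le_two_pow (mem_filter.1 hs).2) _)
  have hcard : #feasible < 2 ^ N :=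
    (card_filter_le _ _).trans_lt (by simp [Nat.sub_lt Nat.one_le_two_pow one_pos])
  have hsplit : (2 ^ N) ^ N = (2 ^ (N - 1)) ^ N * 2 ^ N := by
    rw [← mul_pow, ← pow_succ, Nat.sub_add_cancel hN1]
  have hcount := card_le_mul_card_image_of_maps_to hmaps _ hfiber
  rw [Finset.card_univ, Fintype.card_fun, Fintype.card_fun, Fintype.card_bool, Fintype.card_fun,
    Fintype.card_bool, Fintype.card_fin, ← hN, hsplit] at hcount
  exact absurd hcount (not_le.2 (Nat.mul_lt_mul_of_pos_left hcard (by positivity)))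

theorem mul_logb_lt_two_rpow_iff (s n : ℕ) :
    ((s : ℝ) + 1) * Real.logb 2 ((s : ℝ) + 1) < 2 ^ ((n : ℝ) - 1) ↔
      ((s + 1) ^ (s + 1)) ^ 2 < 2 ^ 2 ^ n := by
  have hlhs : Real.logb 2 ((((s + 1) ^ (s + 1)) ^ 2 : ℕ) : ℝ) =
      2 * (((s : ℝ) + 1) * Real.logb 2 ((s : ℝ) + 1)) := by
    push_cast
    rw [Real.logb_pow, Real.logb_pow]
    push_cast
    ring
  have hrhs : Real.logb 2 ((2 ^ 2 ^ n : ℕ) : ℝ) = 2 * 2 ^ ((n : ℝ) - 1) := by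
    push_cast
    rw [Real.logb_pow, Real.logb_self_eq_one one_lt_two, Real.rpow_sub_one two_ne_zero,
      Real.rpow_natCast]
    push_cast
    ring
  conv_rhs => rw [← Nat.cast_lt (α := ℝ),
    ← Real.logb_lt_logb_iff one_lt_two (by positivity) (by positivity), hlhs, hrhs]
  constructor <;> intro h <;> linarith

/-- For every `n` there exists a Boolean function
`f : {0,1}^n × {0,1}^n → {0,1}` whose garden-hose complexity `s = GH f`
satisfies `(s + 1) · log₂ (s + 1) ≥ 2 ^ (n - 1)`; in particular there exist
functions with exponential garden-hose complexity. -/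
theorem exists_gh_exponential (n : ℕ) :
    ∃ f : (Fin n → Bool) → (Fin n → Bool) → Bool,
      (2 : ℝ) ^ ((n : ℝ) - 1) ≤
        ((GH f : ℝ) + 1) * Real.logb 2 ((GH f : ℝ) + 1) := by
  obtain ⟨f, hf⟩ := exists_two_pow_two_pow_le_GH n
  exact ⟨f, not_lt.1 fun h => (mul_logb_lt_two_rpow_iff _ _ |>.1 h).not_ge hf⟩
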